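/- arXiv:2605.24976 — 2 statements merged into one kernel-verified Lean document; each statement's English description precedes it below -/
import Mathlib

section
/- For an invertible n × n complex matrix A and complementary index sets I, J ⊆ {1,…,n} with |I| = |J|, the minor of A^{-1} on rows I and columns J equals (det A)^{-1} times (a sign) times the complementary minor of A on rows {1,…,n}\J and columns {1,…,n}\I (Jacobi's complementary minor identity). -/
/-!
Reindex the rows of `A` by `J` followed by `Jᶜ` and its columns by `I` followed by `Iᶜ`, each in
increasing order. The inverse of the resulting block matrix `M` is `A⁻¹` reindexed the other way
round, so its top-left block is the minor of `A⁻¹` in question; and for the left block column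
`(X, Z)` of `M⁻¹` one has `M * [[X, 0], [Z, 1]] = [[1, B], [0, D]]`, whence `det M * det X = det D`
with `D` the complementary minor of `A`. Finally `det M = ± det A`: the permutation of `Fin n`
listing `I` before `Iᶜ` has `Σ_{i ∈ I} i - k(k-1)/2` inversions (the pairs `x < y` with `x ∉ I`,
`y ∈ I`), so the two reindexings together contribute the sign `(-1)^(Σ I + Σ J)`.
-/

open Finset Equiv Matrix

namespace Matrix

variable {R m n : Type*} [CommRing R] [Fintype m] [Fintype n] [DecidableEq m] [DecidableEq n]

theorem det_mul_det_toBlocks₁₁_of_mul_eq_one {M N : Matrix (m ⊕ n) (m ⊕ n) R} (h : M * N = 1) :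
    M.det * N.toBlocks₁₁.det = M.toBlocks₂₂.det := by
  rw [← fromBlocks_toBlocks M, ← fromBlocks_toBlocks N, fromBlocks_multiply, ← fromBlocks_one,
    fromBlocks_inj] at h
  obtain ⟨h₁₁, -, h₂₁, -⟩ := h
  have hcol : M * fromBlocks N.toBlocks₁₁ 0 N.toBlocks₂₁ 1 =
      fromBlocks 1 M.toBlocks₁₂ 0 M.toBlocks₂₂ := by
    rw [← fromBlocks_toBlocks M, fromBlocks_multiply]
    simp [h₁₁, h₂₁]
  simpa [det_fromBlocks_zero₁₂, det_fromBlocks_zero₂₁] using congrArg det hcol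

end Matrix

namespace Finset

lemma sum_card_Iio_inter_self {α : Type*} [LinearOrder α] [LocallyFiniteOrderBot α]
    (s : Finset α) : ∑ y ∈ s, #(Iio y ∩ s) = (#s).choose 2 := by
  induction s using Finset.induction_on_max with
  | empty => simp
  | insert a s ha ih =>
    have ha' : a ∉ s := fun h => lt_irrefl a (ha a h)
    rw [sum_insert ha', card_insert_of_notMem ha', Nat.choose_succ_succ', Nat.choose_one_right,
      ← ih]
    congr 1
    · rw [inter_insert_of_notMem (by simp), inter_eq_right.mpr fun x hx => mem_Iio.mpr (ha x hx)]
    · exact sum_congr rfl fun y hy =>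
        by rw [inter_insert_of_notMem (by simpa using (ha y hy).le)]

variable {n k m : ℕ} {I : Finset (Fin n)}

lemma add_eq_of_card_eq_of_card_compl_eq (hI : #I = k) (hIc : #Iᶜ = m) : k + m = n := by
  simpa [hI, hIc] using I.card_add_card_compl

noncomputable def shufflePerm (hI : #I = k) (hIc : #Iᶜ = m) : Perm (Fin n) :=
  (finSumFinEquiv.trans (finCongr (add_eq_of_card_eq_of_card_compl_eq hI hIc))).symm.trans
    (finSumEquivOfFinset hI hIc)

lemma shufflePerm_symm_lt_iff (hI : #I = k) (hIc : #Iᶜ = m) {x y : Fin n} (hxy : x < y) :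
    (shufflePerm hI hIc).symm x < (shufflePerm hI hIc).symm y ↔ x ∈ I ∨ y ∉ I := by
  obtain ⟨u, rfl⟩ := (finSumEquivOfFinset hI hIc).surjective x
  obtain ⟨v, rfl⟩ := (finSumEquivOfFinset hI hIc).surjective y
  simp only [shufflePerm, symm_trans_apply, symm_symm, symm_apply_apply, trans_apply]
  rcases u with a | a <;> rcases v with b | b <;>
    simp only [finSumEquivOfFinset_inl, finSumEquivOfFinset_inr, OrderEmbedding.lt_iff_lt]
      at hxy ⊢
  · exact iff_of_true (Fin.lt_def.2 (by simpa using Fin.lt_def.1 hxy))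
      (.inl (orderEmbOfFin_mem ..))
  · exact iff_of_true (by simp [Fin.lt_def]; omega) (.inl (orderEmbOfFin_mem ..))
  · exact iff_of_false (by simp [Fin.lt_def]; omega)
      (not_or.2 ⟨mem_compl.mp (orderEmbOfFin_mem ..), not_not.2 (orderEmbOfFin_mem ..)⟩)
  · exact iff_of_true (Fin.lt_def.2 (by simpa using Fin.lt_def.1 hxy))
      (.inr (mem_compl.mp (orderEmbOfFin_mem ..)))

lemma sign_shufflePerm_eq_neg_one_pow (hI : #I = k) (hIc : #Iᶜ = m) :
    Perm.sign (shufflePerm hI hIc) = (-1) ^ ∑ y ∈ I, #(Iio y \ I) := by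
  have hrow (y : Fin n) : ∏ x ∈ Iio y,
      (if (shufflePerm hI hIc)⁻¹ x < (shufflePerm hI hIc)⁻¹ y then 1 else -1 : ℤˣ) =
        if y ∈ I then (-1) ^ #(Iio y \ I) else 1 := by
    have hlt : ∀ x ∈ Iio y,
        ((shufflePerm hI hIc)⁻¹ x < (shufflePerm hI hIc)⁻¹ y ↔ x ∈ I ∨ y ∉ I) :=
      fun x hx => shufflePerm_symm_lt_iff hI hIc (mem_Iio.mp hx)
    split_ifs with hy
    · rw [prod_congr rfl fun x hx =>
          if_congr ((hlt x hx).trans (or_iff_left (not_not.2 hy))) rfl rfl, prod_ite,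
        prod_const_one, one_mul, prod_const, filter_notMem_eq_sdiff]
    · exact prod_eq_one fun x hx => if_pos ((hlt x hx).2 (.inr hy))
  rw [← Perm.sign_inv, Perm.sign_eq_prod_prod_Iio, prod_congr rfl fun y _ => hrow y,
    ← prod_filter, filter_mem_eq_inter, univ_inter, prod_pow_eq_pow_sum]

lemma sign_shufflePerm (hI : #I = k) (hIc : #Iᶜ = m) :
    Perm.sign (shufflePerm hI hIc) = (-1) ^ (∑ i ∈ I, (i : ℕ) + k.choose 2) := by
  have hcount : ∑ y ∈ I, #(Iio y \ I) + k.choose 2 = ∑ i ∈ I, (i : ℕ) := by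
    rw [← hI, ← sum_card_Iio_inter_self, ← sum_add_distrib]
    exact sum_congr rfl fun y _ => by rw [card_sdiff_add_card_inter, Fin.card_Iio]
  rw [sign_shufflePerm_eq_neg_one_pow, ← hcount, add_assoc, ← two_mul, pow_add, pow_mul]
  simp

end Finset

theorem Matrix.det_submatrix_finSumEquivOfFinset {R : Type*} [CommRing R] {n k m : ℕ}
    (A : Matrix (Fin n) (Fin n) R) {I J : Finset (Fin n)} (hI : #I = k) (hIc : #Iᶜ = m)
    (hJ : #J = k) (hJc : #Jᶜ = m) :
    (A.submatrix (finSumEquivOfFinset hJ hJc) (finSumEquivOfFinset hI hIc)).det =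
      (-1) ^ (∑ i ∈ I, (i : ℕ) + ∑ j ∈ J, (j : ℕ)) * A.det := by
  rw [← det_submatrix_equiv_self (finSumFinEquiv.trans
    (finCongr (add_eq_of_card_eq_of_card_compl_eq hI hIc))).symm, submatrix_submatrix]
  change ((A.submatrix (shufflePerm hJ hJc) id).submatrix id (shufflePerm hI hIc)).det = _
  rw [det_permute', det_permute, sign_shufflePerm, sign_shufflePerm]
  push_cast
  rw [← mul_assoc, ← pow_add, add_add_add_comm, ← two_mul, pow_add _ _ (2 * _), pow_mul]
  simp

/-- Jacobi's complementary minor identity: for invertible `A`, the minor of `A⁻¹` on rows `I`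
and columns `J` equals `(det A)⁻¹` times the sign `(-1)^(Σ_{i∈I} i + Σ_{j∈J} j)` times the
complementary minor of `A` on rows `Jᶜ` and columns `Iᶜ`. -/
theorem jacobi_complementary_minor {n k : ℕ} (A : Matrix (Fin n) (Fin n) ℂ)
    (hA : IsUnit A.det) (I J : Finset (Fin n)) (hI : I.card = k) (hJ : J.card = k)
    (hIc : Iᶜ.card = n - k) (hJc : Jᶜ.card = n - k) :
    (A⁻¹.submatrix (fun a : Fin k => (I.orderIsoOfFin hI a : Fin n))
        (fun a : Fin k => (J.orderIsoOfFin hJ a : Fin n))).det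
      = A.det⁻¹ * (-1 : ℂ) ^ (∑ i ∈ I, (i : ℕ) + ∑ j ∈ J, (j : ℕ)) *
        (A.submatrix (fun a : Fin (n - k) => (Jᶜ.orderIsoOfFin hJc a : Fin n))
          (fun a : Fin (n - k) => (Iᶜ.orderIsoOfFin hIc a : Fin n))).det := by
  set gI := finSumEquivOfFinset hI hIc
  set gJ := finSumEquivOfFinset hJ hJc
  set ε : ℂ := (-1) ^ (∑ i ∈ I, (i : ℕ) + ∑ j ∈ J, (j : ℕ))
  have hε : ε * ε = 1 := by rw [← pow_add, ← two_mul, pow_mul]; norm_num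
  have hMN : A.submatrix gJ gI * A⁻¹.submatrix gI gJ = 1 := by
    rw [submatrix_mul_equiv, mul_nonsing_inv A hA, submatrix_one_equiv]
  have hblocks := det_mul_det_toBlocks₁₁_of_mul_eq_one hMN
  rw [det_submatrix_finSumEquivOfFinset] at hblocks
  calc _ = (A⁻¹.submatrix gI gJ).toBlocks₁₁.det := rfl
    _ = (A.det⁻¹ * A.det) * (ε * ε) * (A⁻¹.submatrix gI gJ).toBlocks₁₁.det := by
      rw [inv_mul_cancel₀ hA.ne_zero, hε, one_mul, one_mul]
    _ = A.det⁻¹ * ε * (ε * A.det * (A⁻¹.submatrix gI gJ).toBlocks₁₁.det) := by ring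
    _ = _ := by rw [hblocks]; rfl
end

section
/- (Bialternant factorization, column side.) Let y_1,…,y_N be pairwise distinct with |y_l| < 1, let φ_-(z) = ∏_{l=1}^N (1 - y_l/z)^{-1}, let φ_+ be analytic and nonvanishing near the closed unit disk with φ_+(0)=1, and set φ = φ_- φ_+ (so G(φ)=1). Let ξ_1,…,ξ_N be analytic in a neighborhood of |z| ≤ 1. Then det[(ξ_j φ)_{i-j}]_{i,j=1}^N = (det[y_i^{N-j} ξ_{N-j+1}(y_i)]_{i,j=1}^N / ∏_{i<j}(y_i - y_j)) · ∏_{l=1}^N φ_+(y_l). -/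
/-!
By partial fractions, `1 / ∏ (z - y_l) = ∑ w_l / (z - y_l)` with the Lagrange nodal weights
`w_l = 1 / ∏_{m ≠ l} (y_l - y_m)`, so Cauchy's formula evaluates the `(i, j)` Fourier coefficient
as `∑_l y_l^{N-1-i} · φ₊(y_l) w_l · y_l^j ξ_j(y_l)`. Reversing rows and columns, the matrix becomes
`Vᵀ · diag(φ₊(y_l) w_l) · C` with `V` the Vandermonde matrix of the `y_l` and `C` the bialternant
numerator, and `∏_l w_l⁻¹ = ∏_{i<j} (y_i - y_j) · det V`.
-/

/-- The `k`-th Fourier coefficient of a function, computed over the circle of radius `ρ`. -/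
noncomputable def fcR (ρ : ℝ) (f : ℂ → ℂ) (k : ℤ) : ℂ :=
  (2 * (Real.pi : ℂ) * Complex.I)⁻¹ * (∮ z in C(0, ρ), f z * z ^ (-k - 1))

open Finset Metric Lagrange Matrix

theorem inv_prod_sub_eq_sum_nodalWeight_mul_inv_sub {K ι : Type*} [Field K] [Fintype ι]
    [DecidableEq ι] [Nonempty ι] {y : ι → K} (hy : Function.Injective y) {z : K}
    (hz : ∀ l, z ≠ y l) :
    (∏ l, (z - y l))⁻¹ = ∑ l, nodalWeight univ y l * (z - y l)⁻¹ := by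
  have h := eval_interpolate_not_at_node (s := univ) (v := y) 1 (x := z) fun l _ => hz l
  rw [interpolate_one hy.injOn univ_nonempty, Polynomial.eval_one, eval_nodal] at h
  simp only [Pi.one_apply, mul_one] at h
  exact inv_eq_of_mul_eq_one_left (by rw [mul_comm, ← h])

theorem prod_inv_one_sub_div {ι : Type*} [Fintype ι] (y : ι → ℂ) {z : ℂ} (hz : z ≠ 0) :
    ∏ l, (1 - y l / z)⁻¹ = z ^ Fintype.card ι / ∏ l, (z - y l) := by
  rw [← card_univ, ← prod_const, ← prod_div_distrib]
  refine prod_congr rfl fun l _ => ?_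
  rw [one_sub_div hz, inv_div]

theorem circleIntegral_div_prod_sub {ι : Type*} [Fintype ι] [DecidableEq ι] [Nonempty ι]
    {c : ℂ} {R : ℝ} {f : ℂ → ℂ} (hf : DifferentiableOn ℂ f (closedBall c R))
    {y : ι → ℂ} (hy : Function.Injective y) (hyR : ∀ l, y l ∈ ball c R) :
    (∮ z in C(c, R), f z / ∏ l, (z - y l))
      = 2 * Real.pi * Complex.I * ∑ l, nodalWeight univ y l * f (y l) := by
  have hR : 0 ≤ R := (dist_nonneg.trans_lt (hyR (Classical.arbitrary ι))).le
  have hne : ∀ z ∈ sphere c R, ∀ l, z ≠ y l := fun z hz l h => by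
    rw [h] at hz
    exact (mem_ball.1 (hyR l)).ne (mem_sphere.1 hz)
  have hint : ∀ l, CircleIntegrable (fun z => nodalWeight univ y l * ((z - y l)⁻¹ * f z)) c R :=
    fun l => ContinuousOn.circleIntegrable hR <| continuousOn_const.mul <|
      ((continuousOn_id.sub continuousOn_const).inv₀ fun z hz => sub_ne_zero.2 (hne z hz l)).mul
        (hf.continuousOn.mono sphere_subset_closedBall)
  have hcauchy : ∀ l, (∮ z in C(c, R), (z - y l)⁻¹ * f z) = 2 * Real.pi * Complex.I * f (y l) :=
    fun l => by simpa only [smul_eq_mul] using hf.circleIntegral_sub_inv_smul (hyR l)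
  calc (∮ z in C(c, R), f z / ∏ l, (z - y l))
      = ∮ z in C(c, R), ∑ l, nodalWeight univ y l * ((z - y l)⁻¹ * f z) := by
        refine circleIntegral.integral_congr hR fun z hz => ?_
        simp only [div_eq_mul_inv, inv_prod_sub_eq_sum_nodalWeight_mul_inv_sub hy (hne z hz),
          mul_sum]
        exact sum_congr rfl fun l _ => by ring
    _ = ∑ l, nodalWeight univ y l * ∮ z in C(c, R), (z - y l)⁻¹ * f z := by
        rw [circleIntegral.integral_fun_sum fun l _ => hint l]
        simp only [circleIntegral.integral_const_mul]
    _ = _ := by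
        simp only [hcauchy, mul_sum]
        exact sum_congr rfl fun l _ => by ring

theorem fcR_mul_prod_inv_one_sub_div {ι : Type*} [Fintype ι] [DecidableEq ι] [Nonempty ι]
    {ρ r : ℝ} (hρr : ρ < r) {g : ℂ → ℂ} (hg : DifferentiableOn ℂ g (ball 0 r))
    {y : ι → ℂ} (hy : Function.Injective y) (hyρ : ∀ l, ‖y l‖ < ρ) (n : ℕ) :
    fcR ρ (fun z => g z * ∏ l, (1 - y l / z)⁻¹) ((Fintype.card ι : ℤ) - 1 - n)
      = ∑ l, nodalWeight univ y l * (g (y l) * y l ^ n) := by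
  have hρ : 0 < ρ := (norm_nonneg _).trans_lt (hyρ (Classical.arbitrary ι))
  have hf : DifferentiableOn ℂ (fun z => g z * z ^ n) (closedBall 0 ρ) :=
    (hg.mono (closedBall_subset_ball hρr)).mul (differentiableOn_pow n)
  have hshift : ∀ z : ℂ, z ≠ 0 →
      z ^ (-((Fintype.card ι : ℤ) - 1 - n) - 1) * z ^ Fintype.card ι = z ^ n := fun z hz => by
    rw [← zpow_natCast z (Fintype.card ι), ← zpow_add₀ hz, ← zpow_natCast z n]
    ring_nf
  have h2πI : (2 * Real.pi * Complex.I : ℂ) ≠ 0 := by simp [Real.pi_ne_zero]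
  rw [fcR, circleIntegral.integral_congr hρ.le (g := fun z => g z * z ^ n / ∏ l, (z - y l)),
    circleIntegral_div_prod_sub hf hy fun l => mem_ball_zero_iff.2 (hyρ l), ← mul_assoc,
    inv_mul_cancel₀ h2πI, one_mul]
  intro z hz
  have hz0 : z ≠ 0 := ne_zero_of_mem_sphere hρ.ne' ⟨z, hz⟩
  simp only [prod_inv_one_sub_div y hz0, ← hshift z hz0]
  ring

theorem prod_filter_lt_eq_prod_prod_Ioi {α M : Type*} [Fintype α] [LinearOrder α]
    [LocallyFiniteOrderTop α] [CommMonoid M] (g : α → α → M) :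
    ∏ p ∈ univ.filter (fun p : α × α => p.1 < p.2), g p.1 p.2 = ∏ i, ∏ j ∈ Ioi i, g i j := by
  rw [prod_filter, Fintype.prod_prod_type]
  simp only [← prod_filter, filter_lt_eq_Ioi]

theorem prod_prod_erase_sub_eq_mul_det_vandermonde {R : Type*} [CommRing R] {N : ℕ}
    (y : Fin N → R) :
    ∏ l, ∏ m ∈ univ.erase l, (y l - y m)
      = (∏ p ∈ univ.filter (fun p : Fin N × Fin N => p.1 < p.2), (y p.1 - y p.2))
        * (vandermonde y).det := by
  rw [det_vandermonde, prod_filter_lt_eq_prod_prod_Ioi fun i j => y i - y j]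
  simp only [← prod_mul_distrib, ← compl_singleton]
  exact (prod_prod_Ioi_mul_eq_prod_prod_off_diag fun i j => y j - y i).symm

theorem bialternant_column_general {N : ℕ} (y : Fin N → ℂ) (hy : Function.Injective y)
    (ρ : ℝ) (hρ1 : ρ < 1) (hρy : ∀ l, ‖y l‖ < ρ)
    (r : ℝ) (hr : 1 < r)
    (φp : ℂ → ℂ) (hp : DifferentiableOn ℂ φp (Metric.ball (0 : ℂ) r))
    (ξ : Fin N → ℂ → ℂ) (hξ : ∀ j, DifferentiableOn ℂ (ξ j) (Metric.ball (0 : ℂ) r)) :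
    Matrix.det (Matrix.of fun i j : Fin N =>
        fcR ρ (fun z => ξ j z * (φp z * ∏ l, (1 - y l / z)⁻¹)) ((i : ℤ) - (j : ℤ)))
      = Matrix.det (Matrix.of fun i j : Fin N =>
            y i ^ ((Fin.rev j : ℕ)) * ξ (Fin.rev j) (y i)) /
          (∏ p ∈ Finset.univ.filter (fun p : Fin N × Fin N => p.1 < p.2), (y p.1 - y p.2)) *
        ∏ l, φp (y l) := by
  rcases isEmpty_or_nonempty (Fin N) with hN | hN
  · simp
  set M := Matrix.of fun i j : Fin N =>
    fcR ρ (fun z => ξ j z * (φp z * ∏ l, (1 - y l / z)⁻¹)) ((i : ℤ) - (j : ℤ))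
  set C := Matrix.of fun i j : Fin N => y i ^ ((Fin.rev j : ℕ)) * ξ (Fin.rev j) (y i)
  have hfac : M.submatrix Fin.revPerm Fin.revPerm
      = (vandermonde y)ᵀ * diagonal (fun l => φp (y l) * nodalWeight univ y l) * C := by
    ext i j
    have hk : ((Fin.rev i : ℕ) : ℤ) - (Fin.rev j : ℕ)
        = (Fintype.card (Fin N) : ℤ) - 1 - ((i + Fin.rev j : ℕ) : ℤ) := by
      simp only [Fin.val_rev, Fintype.card_fin]; omega
    have hentry := fcR_mul_prod_inv_one_sub_div (hρ1.trans hr) ((hξ (Fin.rev j)).mul hp) hy hρy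
      (i + Fin.rev j)
    simp only [Pi.mul_apply, mul_assoc] at hentry
    rw [mul_apply]
    simp only [M, C, submatrix_apply, Fin.revPerm_apply, of_apply, hk, hentry, mul_diagonal,
      transpose_apply, vandermonde_apply, pow_add]
    exact sum_congr rfl fun l _ => by ring
  calc M.det = (M.submatrix Fin.revPerm Fin.revPerm).det := (det_submatrix_equiv_self _ _).symm
    _ = (vandermonde y).det * ((∏ l, φp (y l)) * ∏ l, nodalWeight univ y l) * C.det := by
      rw [hfac, det_mul, det_mul, det_transpose, det_diagonal, prod_mul_distrib]
    _ = _ := by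
      simp only [nodalWeight, prod_inv_distrib]
      rw [prod_prod_erase_sub_eq_mul_det_vandermonde]
      field_simp [det_vandermonde_ne_zero_iff.2 hy]

/-- Bialternant factorization (column side): for pairwise distinct `|y_l| < 1`,
`φ₋(z) = ∏ (1 - y_l/z)⁻¹`, `φ₊` analytic nonvanishing near the closed unit disk with
`φ₊(0) = 1`, `φ = φ₋ φ₊`, and `ξ_j` analytic near the closed unit disk,
`det[(ξ_j φ)_{i-j}] = (det[y_i^{N-j} ξ_{N-j+1}(y_i)] / ∏_{i<j}(y_i - y_j)) · ∏ φ₊(y_l)`. -/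
theorem bialternant_column {N : ℕ} (y : Fin N → ℂ) (hy : Function.Injective y)
    (hylt : ∀ l, ‖y l‖ < 1)
    (ρ : ℝ) (hρ0 : 0 < ρ) (hρ1 : ρ < 1) (hρy : ∀ l, ‖y l‖ < ρ)
    (r : ℝ) (hr : 1 < r)
    (φp : ℂ → ℂ) (hp : DifferentiableOn ℂ φp (Metric.ball (0 : ℂ) r))
    (hp0 : φp 0 = 1) (hpne : ∀ z ∈ Metric.ball (0 : ℂ) r, φp z ≠ 0)
    (ξ : Fin N → ℂ → ℂ) (hξ : ∀ j, DifferentiableOn ℂ (ξ j) (Metric.ball (0 : ℂ) r)) :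
    Matrix.det (Matrix.of fun i j : Fin N =>
        fcR ρ (fun z => ξ j z * (φp z * ∏ l, (1 - y l / z)⁻¹)) ((i : ℤ) - (j : ℤ)))
      = Matrix.det (Matrix.of fun i j : Fin N =>
            y i ^ ((Fin.rev j : ℕ)) * ξ (Fin.rev j) (y i)) /
          (∏ p ∈ Finset.univ.filter (fun p : Fin N × Fin N => p.1 < p.2), (y p.1 - y p.2)) *
        ∏ l, φp (y l) :=
  bialternant_column_general y hy ρ hρ1 hρy r hr φp hp ξ hξ
end
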